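/- Let {X_ℓ, f_ℓ} and {Y_ℓ, g_ℓ} be inverse sequences of compact metric spaces with surjective continuous bonding functions. The following are equivalent: (1) there is a continuous surjection from varprojlim{X_ℓ, f_ℓ} onto varprojlim{Y_ℓ, g_ℓ}; (2) there are sequences (n_ℓ), (m_ℓ) of positive integers with m_{k+1} ≥ m_k, n_{k+1} > n_k, and m_k ≥ n_k for each k, and a sequence (H_ℓ) of upper semicontinuous set-valued functions H_ℓ : X_{m_ℓ} ⊸ Y_{n_ℓ} such that (a) the graph of each H_k is surjective, (b) for each positive integer k, each j ∈ {1, …, n_k}, each positive integer r > k and each x ∈ X_{m_r}, g_{j,n_r}(H_r(x)) ⊆ g_{j,n_k}(H_k(f_{m_k,m_r}(x))), and (c) for each positive integer j and each x ∈ varprojlim{X_ℓ, f_ℓ}, lim_{k→∞} diam(g_{j,n_k}(H_k(p_{m_k}(x)))) = 0. -/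

import Mathlib

/-!
(1 ⇒ 2): take `n_k = k` and `H_k = T_{k, m_k}(g)`, i.e. `H_k(x) = q_k(g(p_{m_k}⁻¹ x))`. Since the
inverse limit is compact, `g` is uniformly continuous, so `m_k` can be chosen such that points
agreeing at level `m_k` have images within `1/(k+1)` in the coordinates `j ≤ k`.

(2 ⇒ 1): say that `w` lies over `z` if `w_{n_k} ∈ H_k(z_{m_k})` for every `k`. By (b) these
conditions are nested, so by compactness every `z` has some `w` over it and, using (a), every `w`
lies over some `z`; by (c) the `w` over `z` is unique. The resulting map has a closed graph and a
compact codomain, hence is continuous, and it is onto.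
-/

open Metric Filter Set Function

/-- The inverse limit of an inverse sequence `{X n, f n}` of spaces with
single-valued bonding maps `f n : X (n+1) → X n`. -/
def invLim (X : ℕ → Type*) (f : ∀ n, X (n + 1) → X n) : Set (∀ n, X n) :=
  {x | ∀ n, x n = f n (x (n + 1))}

/-- The composite bonding map `f_{n,m} : X m → X n` for `n ≤ m`. -/
def bondMap {X : ℕ → Type*} (f : ∀ n, X (n + 1) → X n) {n m : ℕ} (h : n ≤ m) :
    X m → X n :=
  Nat.leRecOn (C := fun k => X k → X n) h (fun {k} g => g ∘ f k) id

/-- A set-valued function is upper semicontinuous (with nonempty closed values):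
all of its values are nonempty closed sets and its graph is closed. -/
def IsUSC {A B : Type*} [TopologicalSpace A] [TopologicalSpace B] (F : A → Set B) : Prop :=
  (∀ a, (F a).Nonempty) ∧ (∀ a, IsClosed (F a)) ∧ IsClosed {p : A × B | p.2 ∈ F p.1}

/-- The `T_{n,m}` transformation of a map between inverse limits:
`T_{n,m}(g)(x) = q_n (g (p_m ⁻¹ x))`. -/
def Ttrans {X Y : ℕ → Type*} {f : ∀ n, X (n + 1) → X n} {gs : ∀ n, Y (n + 1) → Y n}
    (g : ↥(invLim X f) → ↥(invLim Y gs)) (n m : ℕ) (x : X m) : Set (Y n) :=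
  {y | ∃ z : ↥(invLim X f), z.1 m = x ∧ (g z).1 n = y}

/-- A space has the fixed point property if every continuous self-map has a fixed point. -/
def HasFPP (Z : Type*) [TopologicalSpace Z] : Prop :=
  ∀ g : Z → Z, Continuous g → ∃ p, g p = p

section InverseLimit

variable {X : ℕ → Type*} {f : ∀ n, X (n + 1) → X n}

theorem bondMap_self {n : ℕ} (h : n ≤ n) : bondMap f h = id :=
  Nat.leRecOn_self (C := fun k => X k → X n) (next := fun {k} g => g ∘ f k) id

theorem bondMap_succ {n m : ℕ} (h₁ : n ≤ m) (h₂ : n ≤ m + 1) (x : X (m + 1)) :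
    bondMap f h₂ x = bondMap f h₁ (f m x) :=
  congrFun (Nat.leRecOn_succ (C := fun k => X k → X n) h₁ (h2 := h₂)
    (next := fun {k} g => g ∘ f k) id) x

theorem bondMap_succ_self {n : ℕ} (h : n ≤ n + 1) (x : X (n + 1)) : bondMap f h x = f n x := by
  rw [bondMap_succ le_rfl h, bondMap_self, id]

theorem bondMap_trans {n m p : ℕ} (h₁ : n ≤ m) (h₂ : m ≤ p) (h₃ : n ≤ p) (x : X p) :
    bondMap f h₃ x = bondMap f h₁ (bondMap f h₂ x) := by
  induction p, h₂ using Nat.le_induction with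
  | base => rw [bondMap_self, id]
  | succ p hmp ih => rw [bondMap_succ (h₁.trans hmp) h₃, bondMap_succ hmp, ih (h₁.trans hmp)]

theorem apply_eq_bondMap_of_mem_invLim {z : ∀ n, X n} (hz : z ∈ invLim X f) {n m : ℕ}
    (h : n ≤ m) : z n = bondMap f h (z m) := by
  induction m, h using Nat.le_induction with
  | base => rw [bondMap_self, id]
  | succ m hnm ih => rw [bondMap_succ hnm, ← hz m, ih]

theorem exists_mem_invLim_apply_eq (hfs : ∀ n, Surjective (f n)) {m : ℕ} (x : X m) :
    ∃ z : invLim X f, z.1 m = x := by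
  let w : ∀ k, X (m + k) := fun k => Nat.rec x (fun k u => surjInv (hfs (m + k)) u) k
  have hw : ∀ k, f (m + k) (w (k + 1)) = w k := fun k => surjInv_eq (hfs (m + k)) (w k)
  have hw_down : ∀ k (h : m ≤ m + k), bondMap f h (w k) = x := by
    intro k
    induction k with
    | zero => intro h; rw [bondMap_self, id]; rfl
    | succ k ih => intro h; rw [bondMap_succ (Nat.le_add_right m k) h, hw k, ih]
  refine ⟨⟨fun n => bondMap f (Nat.le_add_left n m) (w n), fun n => ?_⟩, hw_down m _⟩
  calc bondMap f (Nat.le_add_left n m) (w n)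
      = bondMap f (by omega) (w (n + 1)) := by rw [bondMap_succ (Nat.le_add_left n m), hw n]
    _ = f n (bondMap f (Nat.le_add_left (n + 1) m) (w (n + 1))) := by
      rw [bondMap_trans n.le_succ (Nat.le_add_left (n + 1) m), bondMap_succ_self]

variable [∀ n, TopologicalSpace (X n)]

theorem isClosed_invLim [∀ n, T2Space (X n)] (hfc : ∀ n, Continuous (f n)) :
    IsClosed (invLim X f) := by
  simp only [invLim, ofPred_forall]
  exact isClosed_iInter fun n => isClosed_eq (by fun_prop) ((hfc n).comp (by fun_prop))

@[fun_prop]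
theorem Continuous.invLim_apply {Z : Type*} [TopologicalSpace Z] {φ : Z → invLim X f}
    (hφ : Continuous φ) (n : ℕ) : Continuous fun y => (φ y).1 n :=
  (continuous_apply n).comp (continuous_subtype_val.comp hφ)

theorem compactSpace_invLim [∀ n, CompactSpace (X n)] [∀ n, T2Space (X n)]
    (hfc : ∀ n, Continuous (f n)) : CompactSpace (invLim X f) :=
  isCompact_iff_compactSpace.mp (isClosed_invLim hfc).isCompact

end InverseLimit

theorem exists_forall_mem_of_antitone {α : Type*} [TopologicalSpace α] [CompactSpace α]
    {T : ℕ → Set α} (hT : Antitone T) (hne : ∀ k, (T k).Nonempty) (hcl : ∀ k, IsClosed (T k)) :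
    ∃ a, ∀ k, a ∈ T k := by
  obtain ⟨a, ha⟩ := IsCompact.nonempty_iInter_of_sequence_nonempty_isCompact_isClosed
    T (fun k => hT k.le_succ) hne (hcl 0).isCompact hcl
  exact ⟨a, mem_iInter.1 ha⟩

theorem continuous_of_isClosed_graph {A B : Type*} [TopologicalSpace A] [TopologicalSpace B]
    [CompactSpace B] {G : A → B} (hG : IsClosed {p : A × B | G p.1 = p.2}) : Continuous G := by
  refine continuous_iff_isClosed.2 fun C hC => ?_
  have hpre : G ⁻¹' C = Prod.fst '' ({p : A × B | G p.1 = p.2} ∩ univ ×ˢ C) := by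
    ext a
    simp
  rw [hpre]
  exact isClosedMap_fst_of_compactSpace _ (hG.inter (isClosed_univ.prod hC))

section Ttrans

variable {X Y : ℕ → Type*} {f : ∀ n, X (n + 1) → X n} {gs : ∀ n, Y (n + 1) → Y n}

theorem exists_level_dist_lt [∀ n, TopologicalSpace (X n)] [∀ n, T2Space (X n)]
    [CompactSpace (invLim X f)] {E : Type*} [PseudoMetricSpace E] {φ : invLim X f → E}
    (hφ : Continuous φ) {ε : ℝ} (hε : 0 < ε) :
    ∃ m, ∀ z z' : invLim X f, z.1 m = z'.1 m → dist (φ z) (φ z') < ε := by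
  by_contra! h
  let S : ℕ → Set (invLim X f × invLim X f) := fun m =>
    {p | p.1.1 m = p.2.1 m ∧ ε ≤ dist (φ p.1) (φ p.2)}
  have hS : Antitone S := antitone_nat_of_succ_le fun m p hp =>
    ⟨by rw [p.1.2 m, p.2.2 m, hp.1], hp.2⟩
  obtain ⟨p, hp⟩ := exists_forall_mem_of_antitone hS
    (fun m => let ⟨z, z', hzz', hd⟩ := h m; ⟨(z, z'), hzz', hd⟩)
    (fun m => (isClosed_eq (by fun_prop) (by fun_prop)).inter
      (isClosed_le continuous_const ((hφ.comp continuous_fst).dist (hφ.comp continuous_snd))))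
  have hp_diag : p.1 = p.2 := Subtype.ext (funext fun m => (hp m).1)
  have := (hp 0).2
  rw [hp_diag, dist_self] at this
  linarith

theorem image_bondMap_Ttrans (g : invLim X f → invLim Y gs) {j n m : ℕ} (hj : j ≤ n) (x : X m) :
    bondMap gs hj '' Ttrans g n m x = Ttrans g j m x := by
  ext y
  constructor
  · rintro ⟨_, ⟨z, hz, rfl⟩, rfl⟩
    exact ⟨z, hz, apply_eq_bondMap_of_mem_invLim (g z).2 hj⟩
  · rintro ⟨z, hz, rfl⟩
    exact ⟨_, ⟨z, hz, rfl⟩, (apply_eq_bondMap_of_mem_invLim (g z).2 hj).symm⟩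

theorem Ttrans_subset_Ttrans_bondMap (g : invLim X f → invLim Y gs) {n m m' : ℕ} (h : m ≤ m')
    (x : X m') :
    Ttrans g n m' x ⊆ Ttrans g n m (bondMap f h x) := by
  rintro _ ⟨z, rfl, rfl⟩
  exact ⟨z, apply_eq_bondMap_of_mem_invLim z.2 h, rfl⟩

theorem exists_mem_Ttrans {g : invLim X f → invLim Y gs} (hg : Surjective g)
    (hgs : ∀ n, Surjective (gs n)) {n : ℕ} (m : ℕ) (y : Y n) : ∃ x, y ∈ Ttrans g n m x := by
  obtain ⟨w, hw⟩ := exists_mem_invLim_apply_eq hgs y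
  obtain ⟨z, rfl⟩ := hg w
  exact ⟨z.1 m, z, rfl, hw⟩

theorem isUSC_Ttrans [∀ n, TopologicalSpace (X n)] [∀ n, T2Space (X n)]
    [∀ n, TopologicalSpace (Y n)] [∀ n, T2Space (Y n)] [CompactSpace (invLim X f)]
    (hfs : ∀ n, Surjective (f n)) {g : invLim X f → invLim Y gs} (hg : Continuous g) (n m : ℕ) :
    IsUSC (Ttrans g n m) := by
  have hgraph : {p : X m × Y n | p.2 ∈ Ttrans g n m p.1} =
      range fun z : invLim X f => (z.1 m, (g z).1 n) := by
    ext p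
    simp [Ttrans, Prod.ext_iff]
  have hclosed : IsClosed {p : X m × Y n | p.2 ∈ Ttrans g n m p.1} :=
    hgraph ▸ (isCompact_range (by fun_prop)).isClosed
  refine ⟨fun x => ?_, fun x => hclosed.preimage (continuous_const.prodMk continuous_id), hclosed⟩
  obtain ⟨z, hz⟩ := exists_mem_invLim_apply_eq hfs x
  exact ⟨(g z).1 n, z, hz, rfl⟩

theorem exists_levels_diam_Ttrans_le [∀ n, TopologicalSpace (X n)] [∀ n, T2Space (X n)]
    [CompactSpace (invLim X f)] [∀ n, MetricSpace (Y n)] {g : invLim X f → invLim Y gs}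
    (hg : Continuous g) :
    ∃ ms : ℕ → ℕ, Monotone ms ∧ (∀ k, k ≤ ms k) ∧
      ∀ j k, j ≤ k → ∀ x, diam (Ttrans g j (ms k) x) ≤ 1 / (k + 1) := by
  -- the sup metric on `Fin (k + 1) → _` controls all coordinates `j ≤ k` at once
  have hlevel : ∀ k : ℕ, ∃ m, ∀ z z' : invLim X f, z.1 m = z'.1 m →
      dist (fun j : Fin (k + 1) => (g z).1 j) (fun j => (g z').1 j) < 1 / (k + 1) :=
    fun k => exists_level_dist_lt (by fun_prop) (by positivity)
  choose c hc using hlevel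
  have hc_le : ∀ k, c k ≤ ∑ i ∈ Finset.range (k + 1), c i := fun k =>
    Finset.single_le_sum (fun i _ => Nat.zero_le (c i)) (Finset.self_mem_range_succ k)
  refine ⟨fun k => k + ∑ i ∈ Finset.range (k + 1), c i,
    monotone_nat_of_le_succ fun k => ?_, fun k => Nat.le_add_right _ _, fun j k hjk x => ?_⟩
  · rw [Finset.sum_range_succ _ (k + 1)]
    omega
  · refine diam_le_of_forall_dist_le (by positivity) ?_
    rintro _ ⟨z, hz, rfl⟩ _ ⟨z', hz', rfl⟩
    have hzz' : z.1 (c k) = z'.1 (c k) := by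
      rw [apply_eq_bondMap_of_mem_invLim z.2 ((hc_le k).trans (Nat.le_add_left _ k)),
        apply_eq_bondMap_of_mem_invLim z'.2 ((hc_le k).trans (Nat.le_add_left _ k)), hz, hz']
    exact (dist_le_pi_dist _ _ (⟨j, by omega⟩ : Fin (k + 1))).trans (hc k z z' hzz').le

end Ttrans

section LiesOver

variable {X Y : ℕ → Type*} {f : ∀ n, X (n + 1) → X n} {gs : ∀ n, Y (n + 1) → Y n}
  {ns ms : ℕ → ℕ} {H : ∀ k, X (ms k) → Set (Y (ns k))}

variable (H) in
def LiesOver (z : ∀ n, X n) (w : ∀ n, Y n) : Prop :=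
  ∀ k, w (ns k) ∈ H k (z (ms k))

theorem isClosed_liesOver [∀ n, TopologicalSpace (X n)] [∀ n, TopologicalSpace (Y n)]
    (hH : ∀ k, IsClosed {p : X (ms k) × Y (ns k) | p.2 ∈ H k p.1}) :
    IsClosed {p : (∀ n, X n) × (∀ n, Y n) | LiesOver H p.1 p.2} := by
  simp only [LiesOver, ofPred_forall]
  exact isClosed_iInter fun k =>
    (hH k).preimage (((continuous_apply _).comp continuous_fst).prodMk
      ((continuous_apply _).comp continuous_snd))

section Step

variable {hns : ∀ k, ns k ≤ ns (k + 1)} {hms : ∀ k, ms k ≤ ms (k + 1)}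

theorem mem_apply_of_mem_apply_succ
    (hstep : ∀ k x, bondMap gs (hns k) '' H (k + 1) x ⊆ H k (bondMap f (hms k) x))
    {z : ∀ n, X n} {w : ∀ n, Y n} (hz : z ∈ invLim X f) (hw : w ∈ invLim Y gs) {k : ℕ}
    (h : w (ns (k + 1)) ∈ H (k + 1) (z (ms (k + 1)))) :
    w (ns k) ∈ H k (z (ms k)) := by
  rw [apply_eq_bondMap_of_mem_invLim hz (hms k), apply_eq_bondMap_of_mem_invLim hw (hns k)]
  exact hstep k _ (mem_image_of_mem _ h)

variable [∀ n, TopologicalSpace (X n)] [∀ n, TopologicalSpace (Y n)]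

theorem exists_liesOver [CompactSpace (invLim Y gs)]
    (hstep : ∀ k x, bondMap gs (hns k) '' H (k + 1) x ⊆ H k (bondMap f (hms k) x))
    (hgs : ∀ n, Surjective (gs n)) (husc : ∀ k, IsUSC (H k)) {z : ∀ n, X n}
    (hz : z ∈ invLim X f) :
    ∃ w : invLim Y gs, LiesOver H z w.1 := by
  refine exists_forall_mem_of_antitone
    (T := fun k => {w : invLim Y gs | w.1 (ns k) ∈ H k (z (ms k))})
    (antitone_nat_of_succ_le fun k w hw => mem_apply_of_mem_apply_succ hstep hz w.2 hw)
    (fun k => ?_) (fun k => ((husc k).2.1 _).preimage (by fun_prop))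
  obtain ⟨y, hy⟩ := (husc k).1 (z (ms k))
  obtain ⟨w, hw⟩ := exists_mem_invLim_apply_eq hgs y
  exact ⟨w, by rwa [mem_ofPred_eq, hw]⟩

theorem exists_liesOver_of_mem [CompactSpace (invLim X f)]
    (hstep : ∀ k x, bondMap gs (hns k) '' H (k + 1) x ⊆ H k (bondMap f (hms k) x))
    (hfs : ∀ n, Surjective (f n)) (husc : ∀ k, IsUSC (H k)) (hsurj : ∀ k y, ∃ x, y ∈ H k x)
    {w : ∀ n, Y n} (hw : w ∈ invLim Y gs) : ∃ z : invLim X f, LiesOver H z.1 w := by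
  refine exists_forall_mem_of_antitone
    (T := fun k => {z : invLim X f | w (ns k) ∈ H k (z.1 (ms k))})
    (antitone_nat_of_succ_le fun k z hz => mem_apply_of_mem_apply_succ hstep z.2 hw hz)
    (fun k => ?_)
    (fun k => (husc k).2.2.preimage (f := fun z : invLim X f => (z.1 (ms k), w (ns k)))
      (by fun_prop))
  obtain ⟨x, hx⟩ := hsurj k (w (ns k))
  obtain ⟨z, hz⟩ := exists_mem_invLim_apply_eq hfs x
  exact ⟨z, by rwa [mem_ofPred_eq, hz]⟩

end Step

theorem eq_of_liesOver [∀ n, MetricSpace (Y n)] [∀ n, CompactSpace (Y n)]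
    (hns : Tendsto ns atTop atTop) {z : ∀ n, X n}
    (hdiam : ∀ j, Tendsto (fun k => diam (if hj : j ≤ ns k then
      bondMap gs hj '' H k (z (ms k)) else (∅ : Set (Y j)))) atTop (nhds 0))
    {w w' : ∀ n, Y n} (hw : w ∈ invLim Y gs) (hw' : w' ∈ invLim Y gs)
    (h : LiesOver H z w) (h' : LiesOver H z w') : w = w' := by
  funext j
  have hmem : ∀ v ∈ invLim Y gs, LiesOver H z v →
      ∀ k (hj : j ≤ ns k), v j ∈ bondMap gs hj '' H k (z (ms k)) :=
    fun v hv hvz k hj => ⟨v (ns k), hvz k, (apply_eq_bondMap_of_mem_invLim hv hj).symm⟩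
  refine dist_le_zero.1 (ge_of_tendsto (hdiam j) ?_)
  filter_upwards [hns.eventually_ge_atTop j] with k hj
  rw [dif_pos hj]
  exact dist_le_diam_of_mem isBounded_of_compactSpace (hmem w hw h k hj) (hmem w' hw' h' k hj)

theorem exists_continuous_surjective_of_usc_sequence [∀ n, TopologicalSpace (X n)]
    [CompactSpace (invLim X f)] [∀ n, MetricSpace (Y n)] [∀ n, CompactSpace (Y n)]
    [CompactSpace (invLim Y gs)] (hfs : ∀ n, Surjective (f n)) (hgs : ∀ n, Surjective (gs n))
    (hns : StrictMono ns) (hms : Monotone ms) (husc : ∀ k, IsUSC (H k))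
    (hsurj : ∀ k y, ∃ x, y ∈ H k x)
    (hstep : ∀ k x, bondMap gs (hns.monotone k.le_succ) '' H (k + 1) x ⊆
      H k (bondMap f (hms k.le_succ) x))
    (hdiam : ∀ j, ∀ z : invLim X f, Tendsto (fun k => diam (if hj : j ≤ ns k then
      bondMap gs hj '' H k (z.1 (ms k)) else (∅ : Set (Y j)))) atTop (nhds 0)) :
    ∃ g : invLim X f → invLim Y gs, Continuous g ∧ Surjective g := by
  choose G hG using fun z : invLim X f => exists_liesOver hstep hgs husc z.2
  have hG_iff : ∀ z w, G z = w ↔ LiesOver H z.1 w.1 := fun z w =>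
    ⟨fun h => h ▸ hG z, fun h => Subtype.ext <|
      eq_of_liesOver hns.tendsto_atTop (hdiam · z) (G z).2 w.2 (hG z) h⟩
  have hgraph : {p : invLim X f × invLim Y gs | G p.1 = p.2} =
      (fun p => (p.1.1, p.2.1)) ⁻¹' {p | LiesOver H p.1 p.2} := by
    ext p
    exact hG_iff p.1 p.2
  refine ⟨G, continuous_of_isClosed_graph ?_, fun w => ?_⟩
  · rw [hgraph]
    exact (isClosed_liesOver fun k => (husc k).2.2).preimage (by fun_prop)
  · obtain ⟨z, hz⟩ := exists_liesOver_of_mem hstep hfs husc hsurj w.2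
    exact ⟨z, (hG_iff z w).2 hz⟩

end LiesOver

theorem stmt10
    {X Y : ℕ → Type*} [∀ n, MetricSpace (X n)] [∀ n, CompactSpace (X n)]
    [∀ n, MetricSpace (Y n)] [∀ n, CompactSpace (Y n)]
    (f : ∀ n, X (n + 1) → X n) (gs : ∀ n, Y (n + 1) → Y n)
    (hfc : ∀ n, Continuous (f n)) (hfs : ∀ n, Surjective (f n))
    (hgc : ∀ n, Continuous (gs n)) (hgs : ∀ n, Surjective (gs n)) :
    (∃ g : ↥(invLim X f) → ↥(invLim Y gs), Continuous g ∧ Surjective g) ↔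
    (∃ ns ms : ℕ → ℕ, ∃ H : ∀ k, X (ms k) → Set (Y (ns k)),
      (∀ k, ms k ≤ ms (k + 1)) ∧ (∀ k, ns k < ns (k + 1)) ∧
      (∀ k, ns k ≤ ms k) ∧
      (∀ k, IsUSC (H k)) ∧
      (∀ k, ∀ y : Y (ns k), ∃ x : X (ms k), y ∈ H k x) ∧
      (∀ k r : ℕ, k < r → ∀ (hnr : ns k ≤ ns r) (hmr : ms k ≤ ms r),
        ∀ j : ℕ, ∀ hj : j ≤ ns k, ∀ x : X (ms r),
          bondMap gs (hj.trans hnr) '' H r x ⊆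
            bondMap gs hj '' H k (bondMap f hmr x)) ∧
      (∀ j : ℕ, ∀ z : ↥(invLim X f),
        Tendsto (fun k =>
            diam (if hj : j ≤ ns k then
              bondMap gs hj '' H k (z.1 (ms k))
            else (∅ : Set (Y j))))
          atTop (nhds (0 : ℝ)))) := by
  have := compactSpace_invLim hfc
  have := compactSpace_invLim hgc
  constructor
  · rintro ⟨g, hg, hg_surj⟩
    obtain ⟨ms, hms, hms_ge, hdiam⟩ := exists_levels_diam_Ttrans_le hg
    refine ⟨fun k => k, ms, fun k => Ttrans g k (ms k), fun k => hms k.le_succ,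
      fun k => k.lt_succ_self, hms_ge, fun k => isUSC_Ttrans hfs hg k (ms k),
      fun k => exists_mem_Ttrans hg_surj hgs _,
      fun k r _ hnr hmr j hj x => ?_, fun j z => ?_⟩
    · dsimp only
      rw [image_bondMap_Ttrans, image_bondMap_Ttrans]
      exact Ttrans_subset_Ttrans_bondMap g hmr x
    · refine squeeze_zero' (Eventually.of_forall fun k => diam_nonneg) ?_
        tendsto_one_div_add_atTop_nhds_zero_nat
      filter_upwards [eventually_ge_atTop j] with k hk
      rw [dif_pos hk, image_bondMap_Ttrans]
      exact hdiam j k hk _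
  · rintro ⟨ns, ms, H, hms, hns, -, husc, hsurj, hcompat, hdiam⟩
    have hns' : StrictMono ns := strictMono_nat_of_lt_succ hns
    have hms' : Monotone ms := monotone_nat_of_le_succ hms
    refine exists_continuous_surjective_of_usc_sequence hfs hgs hns' hms' husc hsurj (fun k x => ?_)
      hdiam
    simpa only [bondMap_self, image_id] using
      hcompat k (k + 1) k.lt_succ_self (hns k).le (hms k) (ns k) le_rfl x
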